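/- Let p(t) := min(−t, 1). Then p is concave on ℝ, and for any Hermitian-matrix-valued integrable random variable Y, 𝔼 tr p(Y) ≤ tr p(𝔼Y). -/

import Mathlib

open Matrix
open scoped ComplexOrder

/-- Spectral functional calculus for Hermitian matrices (junk value `0` otherwise). -/
noncomputable def matFun {d : ℕ} (f : ℝ → ℝ) (A : Matrix (Fin d) (Fin d) ℂ) :
    Matrix (Fin d) (Fin d) ℂ :=
  if hA : A.IsHermitian then
    (hA.eigenvectorUnitary : Matrix (Fin d) (Fin d) ℂ) *
      Matrix.diagonal (fun i => (f (hA.eigenvalues i) : ℂ)) *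
      (hA.eigenvectorUnitary : Matrix (Fin d) (Fin d) ℂ)ᴴ
  else 0

open MeasureTheory

/-! For concave `f`, Peierls' inequality `∑ⱼ f(λⱼ(B)) ≤ ∑ᵢ f(⟪uᵢ, B uᵢ⟫)` holds for every
orthonormal basis `(uᵢ)`: in the basis `u` the diagonal of `B` is the image of its spectrum under
the doubly stochastic matrix `(|⟪uᵢ, vⱼ⟫|²)` (with `(vⱼ)` an eigenbasis of `B`), so this is finite
Jensen, and equality holds when `u` is itself an eigenbasis. Taking for `u` an eigenbasis of `𝔼Y`,
the scalar Jensen inequality for each `ω ↦ ⟪uᵢ, Y(ω) uᵢ⟫` gives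
`𝔼 tr f(Y) ≤ ∑ᵢ f(⟪uᵢ, 𝔼Y uᵢ⟫) = tr f(𝔼Y)`.

As a minimum over the compact unitary group, `tr f(B)` is continuous in Hermitian `B`; this is what
makes `ω ↦ tr f(Y ω)` measurable. -/

open Set

namespace Matrix

variable {𝕜 : Type*} [RCLike 𝕜] {n : Type*} [Fintype n] [DecidableEq n]

lemma re_mul_diagonal_mul_conjTranspose_apply_self (X : Matrix n n 𝕜) (v : n → ℝ) (i : n) :
    RCLike.re ((X * diagonal (fun j => (v j : 𝕜)) * Xᴴ) i i) = ∑ j, ‖X i j‖ ^ 2 * v j := by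
  simp only [mul_apply, diagonal_apply, mul_ite, mul_zero, Finset.sum_ite_eq', Finset.mem_univ,
    if_true, conjTranspose_apply, map_sum]
  refine Finset.sum_congr rfl fun j _ => ?_
  rw [mul_right_comm, RCLike.star_def, RCLike.mul_conj, ← RCLike.ofReal_pow, ← RCLike.ofReal_mul,
    RCLike.ofReal_re]

lemma sum_norm_sq_row_eq_one {U : Matrix n n 𝕜} (hU : U ∈ unitaryGroup n 𝕜) (i : n) :
    ∑ j, ‖U i j‖ ^ 2 = 1 := by
  simpa [← star_eq_conjTranspose, mem_unitaryGroup_iff.mp hU] using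
    (re_mul_diagonal_mul_conjTranspose_apply_self U 1 i).symm

lemma sum_norm_sq_col_eq_one {U : Matrix n n 𝕜} (hU : U ∈ unitaryGroup n 𝕜) (j : n) :
    ∑ i, ‖U i j‖ ^ 2 = 1 := by
  simpa using sum_norm_sq_row_eq_one (Unitary.star_mem hU) j

lemma isCompact_unitaryGroup : IsCompact (unitaryGroup n 𝕜 : Set (Matrix n n 𝕜)) := by
  have hclosed : IsClosed (unitaryGroup n 𝕜 : Set (Matrix n n 𝕜)) := by
    have hmem : (unitaryGroup n 𝕜 : Set (Matrix n n 𝕜)) =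
        {U | star U * U = 1} ∩ {U | U * star U = 1} := by
      ext U; exact Unitary.mem_iff
    rw [hmem]
    exact (isClosed_eq (by fun_prop) continuous_const).inter
      (isClosed_eq (by fun_prop) continuous_const)
  refine (isCompact_univ_pi fun _ => isCompact_univ_pi fun _ =>
    isCompact_closedBall (0 : 𝕜) 1).of_isClosed_subset hclosed ?_
  intro U hU i _ j _
  simpa using entry_norm_bound_of_unitary hU i j

lemma norm_mul_mul_apply_le {U V : Matrix n n 𝕜} (hU : U ∈ unitaryGroup n 𝕜)
    (hV : V ∈ unitaryGroup n 𝕜) (B : Matrix n n 𝕜) (i j : n) :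
    ‖(U * B * V) i j‖ ≤ ∑ k, ∑ l, ‖B k l‖ := by
  calc ‖(U * B * V) i j‖ = ‖∑ l, (∑ k, U i k * B k l) * V l j‖ := by simp only [mul_apply]
    _ ≤ ∑ l, ∑ k, ‖U i k‖ * ‖B k l‖ * ‖V l j‖ := by
        refine (norm_sum_le _ _).trans (Finset.sum_le_sum fun l _ => ?_)
        rw [norm_mul, ← Finset.sum_mul]
        gcongr
        exact (norm_sum_le _ _).trans_eq (by simp only [norm_mul])
    _ ≤ ∑ l, ∑ k, 1 * ‖B k l‖ * 1 := by
        gcongr with l _ k _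
        exacts [entry_norm_bound_of_unitary hU i k, entry_norm_bound_of_unitary hV l j]
    _ = ∑ k, ∑ l, ‖B k l‖ := by simp only [mul_one, one_mul]; exact Finset.sum_comm

/-- `diagSum f B U = ∑ᵢ f(⟪uᵢ, B uᵢ⟫)`, where `uᵢ` are the columns of `U`. -/
noncomputable def diagSum (f : ℝ → ℝ) (B U : Matrix n n 𝕜) : ℝ :=
  ∑ i, f (RCLike.re ((star U * B * U) i i))

namespace IsHermitian

variable {B : Matrix n n 𝕜} (hB : B.IsHermitian)

lemma star_eigenvectorUnitary_mul_mul_self :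
    star (hB.eigenvectorUnitary : Matrix n n 𝕜) * B * (hB.eigenvectorUnitary : Matrix n n 𝕜) =
      diagonal (RCLike.ofReal ∘ hB.eigenvalues) := by
  simpa using hB.conjStarAlgAut_star_eigenvectorUnitary

lemma diagSum_eigenvectorUnitary (f : ℝ → ℝ) :
    diagSum f B (hB.eigenvectorUnitary : Matrix n n 𝕜) = ∑ i, f (hB.eigenvalues i) := by
  simp [diagSum, hB.star_eigenvectorUnitary_mul_mul_self]

lemma sum_eigenvalues_le_diagSum {f : ℝ → ℝ} (hf : ConcaveOn ℝ univ f) {U : Matrix n n 𝕜}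
    (hU : U ∈ unitaryGroup n 𝕜) : ∑ j, f (hB.eigenvalues j) ≤ diagSum f B U := by
  set X := star U * (hB.eigenvectorUnitary : Matrix n n 𝕜)
  have hX : X ∈ unitaryGroup n 𝕜 := mul_mem (Unitary.star_mem hU) hB.eigenvectorUnitary.2
  have hconj : star U * B * U = X * diagonal (fun j => (hB.eigenvalues j : 𝕜)) * Xᴴ := by
    conv_lhs => rw [hB.spectral_theorem]
    simp [X, ← star_eq_conjTranspose, Matrix.mul_assoc, Function.comp_def]
  have hdiag (i : n) :
      RCLike.re ((star U * B * U) i i) = ∑ j, ‖X i j‖ ^ 2 • hB.eigenvalues j := by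
    rw [hconj, re_mul_diagonal_mul_conjTranspose_apply_self]; rfl
  calc ∑ j, f (hB.eigenvalues j) = ∑ j, (∑ i, ‖X i j‖ ^ 2) * f (hB.eigenvalues j) := by
        simp [sum_norm_sq_col_eq_one hX]
    _ = ∑ i, ∑ j, ‖X i j‖ ^ 2 • f (hB.eigenvalues j) := by
        simp only [Finset.sum_mul, smul_eq_mul]; exact Finset.sum_comm
    _ ≤ ∑ i, f (∑ j, ‖X i j‖ ^ 2 • hB.eigenvalues j) :=
        Finset.sum_le_sum fun i _ => hf.le_map_sum (fun _ _ => by positivity)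
          (sum_norm_sq_row_eq_one hX i) (fun _ _ => mem_univ _)
    _ = diagSum f B U := by simp only [diagSum, hdiag]

lemma abs_eigenvalues_le (i : n) : |hB.eigenvalues i| ≤ ∑ k, ∑ l, ‖B k l‖ := by
  have hW := hB.eigenvectorUnitary.2
  calc |hB.eigenvalues i|
      = |RCLike.re ((star (hB.eigenvectorUnitary : Matrix n n 𝕜) * B *
          hB.eigenvectorUnitary) i i)| := by
        simp [hB.star_eigenvectorUnitary_mul_mul_self]
    _ ≤ ∑ k, ∑ l, ‖B k l‖ :=
        (RCLike.abs_re_le_norm _).trans (norm_mul_mul_apply_le (Unitary.star_mem hW) hW B i i)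

lemma sum_eigenvalues_eq_sInf_diagSum {f : ℝ → ℝ} (hf : ConcaveOn ℝ univ f) :
    ∑ j, f (hB.eigenvalues j) = sInf (diagSum f B '' unitaryGroup n 𝕜) := by
  have hleast : IsLeast (diagSum f B '' unitaryGroup n 𝕜) (∑ j, f (hB.eigenvalues j)) := by
    refine ⟨⟨_, hB.eigenvectorUnitary.2, hB.diagSum_eigenvectorUnitary f⟩, ?_⟩
    rintro _ ⟨U, hU, rfl⟩
    exact hB.sum_eigenvalues_le_diagSum hf hU
  exact hleast.csInf_eq.symm

end IsHermitian

lemma continuous_sInf_diagSum {f : ℝ → ℝ} (hf : Continuous f) :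
    Continuous fun B : Matrix n n 𝕜 => sInf (diagSum f B '' unitaryGroup n 𝕜) :=
  isCompact_unitaryGroup.continuous_sInf (by unfold diagSum; fun_prop)

end Matrix

section Integral

variable {𝕜 : Type*} [RCLike 𝕜] {n : Type*} {Ω : Type*} [MeasurableSpace Ω] {μ : Measure Ω}
  {Y : Ω → Matrix n n 𝕜}

lemma isHermitian_entrywise_integral (hherm : ∀ ω, (Y ω).IsHermitian) :
    (of fun i j => ∫ ω, Y ω i j ∂μ).IsHermitian := by
  ext i j
  simp only [conjTranspose_apply, of_apply, RCLike.star_def, ← integral_conj]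
  exact integral_congr_ae (ae_of_all _ fun ω => by simpa using (hherm ω).apply i j)

variable [Fintype n]

lemma integrable_mul_mul_apply (hY : ∀ i j, Integrable (fun ω => Y ω i j) μ)
    (U V : Matrix n n 𝕜) (i j : n) : Integrable (fun ω => (U * Y ω * V) i j) μ := by
  simp only [mul_apply]
  exact integrable_finsetSum _ fun l _ =>
    (integrable_finsetSum _ fun k _ => (hY k l).const_mul _).mul_const _

lemma integral_mul_mul_apply (hY : ∀ i j, Integrable (fun ω => Y ω i j) μ)
    (U V : Matrix n n 𝕜) (i j : n) :
    ∫ ω, (U * Y ω * V) i j ∂μ = (U * of (fun k l => ∫ ω, Y ω k l ∂μ) * V) i j := by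
  simp only [mul_apply, of_apply]
  rw [integral_finsetSum _ fun l _ =>
    (integrable_finsetSum _ fun k _ => (hY k l).const_mul _).mul_const _]
  refine Finset.sum_congr rfl fun l _ => ?_
  rw [integral_mul_const, integral_finsetSum _ fun k _ => (hY k l).const_mul _]
  simp only [integral_const_mul]

lemma integrable_comp_of_abs_le [IsFiniteMeasure μ] {f : ℝ → ℝ} (hf : Continuous f) {C : ℝ}
    (hfC : ∀ t, |f t| ≤ C * (1 + |t|)) {q : Ω → ℝ} (hq : Integrable q μ) :
    Integrable (fun ω => f (q ω)) μ :=
  (((integrable_const 1).add hq.abs).const_mul C).mono' (hf.comp_aestronglyMeasurable hq.1)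
    (ae_of_all _ fun ω => by simpa using hfC (q ω))

end Integral

section Jensen

variable {𝕜 : Type*} [RCLike 𝕜] {n : Type*} [Fintype n] [DecidableEq n] {Ω : Type*}
  [MeasurableSpace Ω] {μ : Measure Ω} {Y : Ω → Matrix n n 𝕜} {f : ℝ → ℝ} {C : ℝ}

lemma integrable_sum_eigenvalues [IsFiniteMeasure μ] (hf : ConcaveOn ℝ univ f)
    (hfC : ∀ t, |f t| ≤ C * (1 + |t|)) (hherm : ∀ ω, (Y ω).IsHermitian)
    (hY : ∀ i j, Integrable (fun ω => Y ω i j) μ) :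
    Integrable (fun ω => ∑ j, f ((hherm ω).eigenvalues j)) μ := by
  have hC : 0 ≤ C := by simpa using (abs_nonneg _).trans (hfC 0)
  have hmeas : AEStronglyMeasurable (fun ω => ∑ j, f ((hherm ω).eigenvalues j)) μ := by
    simp only [fun ω => (hherm ω).sum_eigenvalues_eq_sInf_diagSum hf]
    exact (continuous_sInf_diagSum hf.locallyLipschitz.continuous).comp_aestronglyMeasurable
      (aemeasurable_pi_lambda _ fun i => aemeasurable_pi_lambda _ fun j =>
        (hY i j).aemeasurable).aestronglyMeasurable
  have hbound : Integrable (fun ω => Fintype.card n * (C * (1 + ∑ k, ∑ l, ‖Y ω k l‖))) μ :=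
    (((integrable_const 1).add (integrable_finsetSum _ fun k _ =>
      integrable_finsetSum _ fun l _ => (hY k l).norm)).const_mul C).const_mul _
  refine hbound.mono' hmeas (ae_of_all _ fun ω => ?_)
  calc ‖∑ j, f ((hherm ω).eigenvalues j)‖ ≤ ∑ j, |f ((hherm ω).eigenvalues j)| :=
        norm_sum_le _ _
    _ ≤ ∑ _j : n, C * (1 + ∑ k, ∑ l, ‖Y ω k l‖) := by
        gcongr with j
        exact (hfC _).trans (by gcongr; exact (hherm ω).abs_eigenvalues_le j)
    _ = Fintype.card n * (C * (1 + ∑ k, ∑ l, ‖Y ω k l‖)) := by simp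

theorem ConcaveOn.integral_sum_eigenvalues_le [IsProbabilityMeasure μ] (hf : ConcaveOn ℝ univ f)
    (hfC : ∀ t, |f t| ≤ C * (1 + |t|)) (hherm : ∀ ω, (Y ω).IsHermitian)
    (hY : ∀ i j, Integrable (fun ω => Y ω i j) μ) :
    ∫ ω, ∑ j, f ((hherm ω).eigenvalues j) ∂μ ≤
      ∑ j, f ((isHermitian_entrywise_integral (μ := μ) hherm).eigenvalues j) := by
  set hA := isHermitian_entrywise_integral (μ := μ) hherm
  set W : Matrix n n 𝕜 := ↑hA.eigenvectorUnitary
  have hfc : Continuous f := hf.locallyLipschitz.continuous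
  have hq (i : n) : Integrable (fun ω => RCLike.re ((star W * Y ω * W) i i)) μ :=
    (integrable_mul_mul_apply hY _ _ i i).re
  have hfq (i : n) := integrable_comp_of_abs_le hfc hfC (hq i)
  calc ∫ ω, ∑ j, f ((hherm ω).eigenvalues j) ∂μ ≤ ∫ ω, diagSum f (Y ω) W ∂μ :=
        integral_mono (integrable_sum_eigenvalues hf hfC hherm hY)
          (integrable_finsetSum _ fun i _ => hfq i)
          fun ω => (hherm ω).sum_eigenvalues_le_diagSum hf hA.eigenvectorUnitary.2
    _ = ∑ i, ∫ ω, f (RCLike.re ((star W * Y ω * W) i i)) ∂μ :=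
        integral_finsetSum _ fun i _ => hfq i
    _ ≤ ∑ i, f (∫ ω, RCLike.re ((star W * Y ω * W) i i) ∂μ) :=
        Finset.sum_le_sum fun i _ => hf.le_map_integral hfc.continuousOn isClosed_univ
          (ae_of_all _ fun _ => mem_univ _) (hq i) (hfq i)
    _ = diagSum f (of fun i j => ∫ ω, Y ω i j ∂μ) W := by
        simp only [diagSum, integral_re (integrable_mul_mul_apply hY _ _ _ _),
          integral_mul_mul_apply hY]
    _ = ∑ j, f (hA.eigenvalues j) := hA.diagSum_eigenvectorUnitary f

end Jensen

lemma re_trace_matFun {d : ℕ} (f : ℝ → ℝ) {B : Matrix (Fin d) (Fin d) ℂ} (hB : B.IsHermitian) :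
    (matFun f B).trace.re = ∑ i, f (hB.eigenvalues i) := by
  rw [matFun, dif_pos hB, trace_mul_cycle, ← star_eq_conjTranspose, Unitary.coe_star_mul_self,
    Matrix.one_mul, trace_diagonal, Complex.re_sum]
  simp

theorem trace_p_jensen_general {d : ℕ} {Ω : Type*} [MeasurableSpace Ω]
    (μ : Measure Ω) [IsProbabilityMeasure μ]
    (Y : Ω → Matrix (Fin d) (Fin d) ℂ)
    (hherm : ∀ ω, (Y ω).IsHermitian)
    (hint : ∀ i j, Integrable (fun ω => Y ω i j) μ) :
    ConcaveOn ℝ Set.univ (fun t : ℝ => min (-t) 1) ∧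
    ∫ ω, (matFun (fun t => min (-t) 1) (Y ω)).trace.re ∂μ
      ≤ (matFun (fun t => min (-t) 1)
          (Matrix.of fun i j => ∫ ω, Y ω i j ∂μ)).trace.re := by
  have hconcave : ConcaveOn ℝ univ (fun t : ℝ => min (-t) 1) :=
    (convexOn_id convex_univ).neg.inf (concaveOn_const 1 convex_univ)
  have hgrowth (t : ℝ) : |min (-t) 1| ≤ 1 * (1 + |t|) := by
    rw [one_mul, abs_le]
    exact ⟨le_min (by linarith [le_abs_self t]) (by linarith [abs_nonneg t]),
      (min_le_right _ _).trans (by linarith [abs_nonneg t])⟩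
  refine ⟨hconcave, ?_⟩
  simp only [re_trace_matFun _ (hherm _), re_trace_matFun _ (isHermitian_entrywise_integral hherm)]
  exact hconcave.integral_sum_eigenvalues_le hgrowth hherm hint

/-- $p(t) = \min(-t,1)$ is concave, and Jensen's inequality for $\mathrm{tr}\,p$. -/
theorem trace_p_jensen {d : ℕ} {Ω : Type*} [MeasurableSpace Ω]
    (μ : Measure Ω) [IsProbabilityMeasure μ]
    (Y : Ω → Matrix (Fin d) (Fin d) ℂ)
    (hherm : ∀ ω, (Y ω).IsHermitian)
    (hmeas : ∀ i j, Measurable fun ω => Y ω i j)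
    (hint : ∀ i j, Integrable (fun ω => Y ω i j) μ) :
    ConcaveOn ℝ Set.univ (fun t : ℝ => min (-t) 1) ∧
    ∫ ω, (matFun (fun t => min (-t) 1) (Y ω)).trace.re ∂μ
      ≤ (matFun (fun t => min (-t) 1)
          (Matrix.of fun i j => ∫ ω, Y ω i j ∂μ)).trace.re :=
  trace_p_jensen_general μ Y hherm hint
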